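/- Let A be a uniform algebra with dense invertibles (A^{-1} is dense in A). Then every Arens–Singer measure for A at a point φ of its maximal ideal space is a Jensen measure for φ. -/

import Mathlib

open MeasureTheory

set_option maxHeartbeats 1000000
set_option synthInstance.maxHeartbeats 400000

open Filter Topology in
lemma aux_log_add_le {a ε t : ℝ} (ha : 0 ≤ a) (hε : 0 < ε) :
    Real.log (a + ε) ≤ max (Real.log a) t + Real.log (1 + ε * Real.exp (-t)) := by
  have he : Real.exp t * Real.exp (-t) = 1 := by rw [← Real.exp_add]; simp
  have h1 : (0:ℝ) < 1 + ε * Real.exp (-t) := by positivity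
  rcases le_or_gt a (Real.exp t) with h | h
  · have h2 : Real.exp t + ε = Real.exp t * (1 + ε * Real.exp (-t)) := by
      linear_combination (-ε) * he
    calc Real.log (a + ε) ≤ Real.log (Real.exp t + ε) :=
          Real.log_le_log (by positivity) (by linarith)
      _ = t + Real.log (1 + ε * Real.exp (-t)) := by
          rw [h2, Real.log_mul (Real.exp_ne_zero t) (ne_of_gt h1), Real.log_exp]
      _ ≤ max (Real.log a) t + Real.log (1 + ε * Real.exp (-t)) :=
          add_le_add_left (le_max_right _ _) _
  · have ha' : 0 < a := lt_trans (Real.exp_pos t) h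
    have h2 : a + ε ≤ a * (1 + ε * Real.exp (-t)) := by
      have h3 : 1 ≤ a * Real.exp (-t) := by
        nlinarith [Real.exp_pos (-t)]
      nlinarith
    calc Real.log (a + ε) ≤ Real.log (a * (1 + ε * Real.exp (-t))) :=
          Real.log_le_log (by positivity) h2
      _ = Real.log a + Real.log (1 + ε * Real.exp (-t)) :=
          Real.log_mul (ne_of_gt ha') (ne_of_gt h1)
      _ ≤ max (Real.log a) t + Real.log (1 + ε * Real.exp (-t)) :=
          add_le_add_left (le_max_left _ _) _
open MeasureTheory Filter Topology

/-- On a uniform algebra with dense invertibles, every Arens–Singer measure for a point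
`φ` of the maximal ideal space is a Jensen measure for `φ`.  (The Jensen inequality
`log|φ(f)| ≤ ∫ log|f| dμ`, whose right side may be `-∞`, is expressed via all
truncations `max (log|f|) t`, and is vacuous when `φ(f) = 0`.) -/
theorem stmt11 {X : Type*} [TopologicalSpace X] [CompactSpace X] [T2Space X]
    [MeasurableSpace X] [BorelSpace X]
    (A : Subalgebra ℂ C(X, ℂ))
    (hclosed : IsClosed (A : Set C(X, ℂ)))
    (hsep : ∀ x y : X, x ≠ y → ∃ f ∈ A, f x ≠ f y)
    (hinv : (A : Set C(X, ℂ)) ⊆ closure {f : C(X, ℂ) | ∃ g ∈ A, f * g = 1 ∧ f ∈ A})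
    (φ : A →ₐ[ℂ] ℂ) (μ : Measure X) [IsProbabilityMeasure μ]
    (hAS : ∀ f : A, (∃ g : A, f * g = 1) →
      Real.log (‖φ f‖) =
        ∫ x, Real.log (‖(f : C(X, ℂ)) x‖) ∂μ) :
    ∀ f : A, φ f ≠ 0 → ∀ t : ℝ,
      Real.log (‖φ f‖) ≤
        ∫ x, max (Real.log (‖(f : C(X, ℂ)) x‖)) t ∂μ := by
  open Filter Topology in
  intro f hf t
  haveI : CompleteSpace A := hclosed.completeSpace_coe
  set F : X → ℝ := fun x => max (Real.log (‖(f : C(X, ℂ)) x‖)) t with hF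
  set L : ℝ := ∫ x, F x ∂μ with hL
  -- integrability of F
  have hfax : ∀ x, Real.log (‖(f : C(X, ℂ)) x‖) ≤ Real.log (‖(f : C(X, ℂ))‖ + 1) := by
    intro x
    rcases eq_or_ne ((f : C(X, ℂ)) x) 0 with h | h
    · simp only [h, norm_zero, Real.log_zero]
      exact Real.log_nonneg (by linarith [norm_nonneg (f : C(X, ℂ))])
    · refine Real.log_le_log (by simpa using h) ?_
      have := (f : C(X, ℂ)).norm_coe_le_norm x
      linarith
  have hFmeas : Measurable F :=
    (Real.measurable_log.comp (continuous_norm.comp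
      (map_continuous (f : C(X, ℂ)))).measurable).max measurable_const
  have hFint : Integrable F μ := by
    refine Integrable.mono' (integrable_const (|Real.log (‖(f : C(X, ℂ))‖ + 1)| + |t|))
      hFmeas.aestronglyMeasurable (ae_of_all _ fun x => ?_)
    rw [Real.norm_eq_abs, abs_le]
    constructor
    · have : -(|Real.log (‖(f : C(X, ℂ))‖ + 1)| + |t|) ≤ t := by
        have := abs_nonneg (Real.log (‖(f : C(X, ℂ))‖ + 1))
        have := neg_abs_le t
        linarith
      exact this.trans (le_max_right _ _)
    · refine max_le ((hfax x).trans ?_) ?_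
      · have := le_abs_self (Real.log (‖(f : C(X, ℂ))‖ + 1))
        have := abs_nonneg t; linarith
      · have := le_abs_self t
        have := abs_nonneg (Real.log (‖(f : C(X, ℂ))‖ + 1)); linarith
  -- key inequality for each n
  have key : ∀ n : ℕ, ∃ g : A, ‖(g : C(X, ℂ)) - (f : C(X, ℂ))‖ < 1 / (n + 1) ∧
      Real.log (‖φ g‖) ≤ L + Real.log (1 + (1 / (n + 1)) * Real.exp (-t)) := by
    intro n
    obtain ⟨g, hg, hdist⟩ := Metric.mem_closure_iff.mp (hinv f.2) (1 / (n + 1)) (by positivity)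
    obtain ⟨h, hhA, hgh, hgA⟩ := hg
    have hnorm : ‖g - (f : C(X, ℂ))‖ < 1 / (n + 1) := by
      rwa [dist_eq_norm, norm_sub_rev] at hdist
    refine ⟨⟨g, hgA⟩, hnorm, ?_⟩
    have hgx : ∀ x, g x ≠ 0 := by
      intro x
      have := DFunLike.congr_fun hgh x
      simp only [ContinuousMap.mul_apply, ContinuousMap.one_apply] at this
      exact left_ne_zero_of_mul_eq_one this
    have hpt : ∀ x, Real.log (‖g x‖) ≤
        F x + Real.log (1 + (1 / (n + 1)) * Real.exp (-t)) := by
      intro x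
      have h1 : ‖g x‖ ≤ ‖(f : C(X, ℂ)) x‖ + 1 / (n + 1) := by
        have h2 : ‖g x - (f : C(X, ℂ)) x‖ ≤ ‖g - (f : C(X, ℂ))‖ := by
          have := (g - (f : C(X, ℂ))).norm_coe_le_norm x
          simpa using this
        have h3 : ‖g x‖ - ‖(f : C(X, ℂ)) x‖ ≤
            ‖g x - (f : C(X, ℂ)) x‖ := by
          simpa using norm_sub_norm_le (g x) ((f : C(X, ℂ)) x)
        linarith
      calc Real.log (‖g x‖) ≤
            Real.log (‖(f : C(X, ℂ)) x‖ + 1 / (n + 1)) :=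
            Real.log_le_log (by simpa using hgx x) h1
        _ ≤ F x + Real.log (1 + (1 / (n + 1)) * Real.exp (-t)) :=
            aux_log_add_le (by positivity) (by positivity)
    have hgcont : Continuous fun x => Real.log (‖g x‖) :=
      (continuous_norm.comp (map_continuous g)).log
        (fun x => by simpa using hgx x)
    have hgint : Integrable (fun x => Real.log (‖g x‖)) μ :=
      hgcont.integrable_of_hasCompactSupport (HasCompactSupport.of_compactSpace _)
    have hAS' := hAS ⟨g, hgA⟩ ⟨⟨h, hhA⟩, Subtype.ext hgh⟩
    rw [hAS']
    calc (∫ x, Real.log (‖g x‖) ∂μ) ≤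
          ∫ x, F x + Real.log (1 + (1 / (n + 1)) * Real.exp (-t)) ∂μ :=
          integral_mono hgint (hFint.add (integrable_const _)) hpt
      _ = L + Real.log (1 + (1 / (n + 1)) * Real.exp (-t)) := by
          rw [integral_add hFint (integrable_const _), integral_const]
          simp [hL]
  choose g hg1 hg2 using key
  have htend0 : Tendsto (fun n : ℕ => (1 : ℝ) / (n + 1)) atTop (𝓝 0) :=
    tendsto_one_div_add_atTop_nhds_zero_nat
  have hgf : Tendsto (fun n => g n) atTop (𝓝 f) := by
    rw [tendsto_iff_norm_sub_tendsto_zero]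
    refine squeeze_zero (fun n => norm_nonneg _) (fun n => ?_) htend0
    have : ‖g n - f‖ = ‖((g n : C(X, ℂ)) - (f : C(X, ℂ)))‖ := rfl
    rw [this]
    exact (hg1 n).le
  have h1 : Tendsto (fun n => Real.log (‖φ (g n)‖)) atTop
      (𝓝 (Real.log (‖φ f‖))) := by
    have hc : ContinuousAt (fun a : A => Real.log (‖φ a‖)) f := by
      refine (Real.continuousAt_log ?_).comp
        (continuous_norm.continuousAt.comp (AlgHom.toContinuousLinearMap φ).continuous.continuousAt)
      simpa using hf
    exact hc.tendsto.comp hgf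
  have h2 : Tendsto (fun n : ℕ => L + Real.log (1 + (1 / (n + 1)) * Real.exp (-t)))
      atTop (𝓝 L) := by
    have : Tendsto (fun n : ℕ => Real.log (1 + (1 / (n + 1 : ℝ)) * Real.exp (-t)))
        atTop (𝓝 0) := by
      have hin : Tendsto (fun n : ℕ => 1 + (1 / (n + 1 : ℝ)) * Real.exp (-t)) atTop (𝓝 1) := by
        have := (htend0.mul_const (Real.exp (-t))).const_add 1
        simpa using this
      have := (Real.continuousAt_log one_ne_zero).tendsto.comp hin
      simpa [Function.comp_def] using this
    simpa using tendsto_const_nhds.add this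
  exact le_of_tendsto_of_tendsto' h1 h2 hg2
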